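/- Let n ≥ 2, let f : [0, ∞) → ℝ be non-negative, locally Lipschitz, and satisfy f(0) > 0, and let κ ∈ C¹(closure B₁) satisfy κ ≥ κ₀ in B₁ for some constant κ₀ > 0. Then there exists a constant c > 0, depending only on n, f, and κ₀, such that any solution u ∈ C²(B₁) ∩ C⁰(closure B₁) of −Δu = κ f(u) in B₁, u > 0 in B₁, u = 0 on ∂B₁, satisfies u(x) ≥ c(1 − |x|²) for all x ∈ B₁; in particular ‖u‖_{L^∞(B₁)} ≥ c. -/

import Mathlib

open Metric Set MeasureTheory Filter
open scoped Pointwise ENNReal NNReal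

noncomputable section

/-- The Laplacian of a function `u : ℝⁿ → ℝ`. -/
def lap {n : ℕ} (u : EuclideanSpace ℝ (Fin n) → ℝ) (x : EuclideanSpace ℝ (Fin n)) : ℝ :=
  ∑ i, fderiv ℝ (fun y => fderiv ℝ u y (EuclideanSpace.single i 1)) x (EuclideanSpace.single i 1)

/-- The radial derivative `∂_r v (x) = (x/|x|) ⬝ ∇v(x)`. -/
def radDeriv {n : ℕ} (v : EuclideanSpace ℝ (Fin n) → ℝ) (x : EuclideanSpace ℝ (Fin n)) : ℝ :=
  (inner ℝ (‖x‖⁻¹ • x) (gradient v x) : ℝ)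

/-- The angular gradient `∇^T v (x) = ∇v(x) - (∂_r v(x)) x/|x|`. -/
def angGrad {n : ℕ} (v : EuclideanSpace ℝ (Fin n) → ℝ) (x : EuclideanSpace ℝ (Fin n)) :
    EuclideanSpace ℝ (Fin n) :=
  gradient v x - radDeriv v x • (‖x‖⁻¹ • x)

/-- Sup of `|v|` over a set, i.e. the `L^∞` norm of a continuous function. -/
def supAbsOn {n : ℕ} (s : Set (EuclideanSpace ℝ (Fin n))) (v : EuclideanSpace ℝ (Fin n) → ℝ) : ℝ :=
  ⨆ x : s, |v x.1|

/-- The deficit `def(κ) = ‖∇^T κ‖_{L^∞(B₁)} + ‖∂_r⁺ κ‖_{L^∞(B₁)}`. -/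
def deficit {n : ℕ} (κ : EuclideanSpace ℝ (Fin n) → ℝ) : ℝ :=
  (⨆ x : (ball (0 : EuclideanSpace ℝ (Fin n)) 1 \ {0} : Set (EuclideanSpace ℝ (Fin n))),
      ‖angGrad κ x.1‖) +
  (⨆ x : (ball (0 : EuclideanSpace ℝ (Fin n)) 1 \ {0} : Set (EuclideanSpace ℝ (Fin n))),
      max (radDeriv κ x.1) 0)


/-!
Weak comparison with the torsion function `w = c (1 - |x|²)`, for which `Δw = -2nc`. Continuity of
`f` at `0` gives `ε > 0` with `κ₀ f(s) > ε` for `0 ≤ s ≤ ε`; take `c = ε / (2n)`. Where `u < w` we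
have `0 < u < c ≤ ε`, so `-Δu = κ f(u) > ε = -Δw`. Hence `u - w` cannot attain a negative minimum
in the ball (there `Δ(u - w) ≥ 0`), nor on the sphere, where `u = w = 0`.
-/

open Topology

/-- If `deriv (deriv g) t < 0`, the second-derivative test makes `t` a local maximum as well, so
`g` is locally constant near `t` and `deriv (deriv g) t = 0`. -/
theorem IsLocalMin.deriv_deriv_nonneg {g : ℝ → ℝ} {t : ℝ} (h : IsLocalMin g t)
    (hc : ContinuousAt g t) : 0 ≤ deriv (deriv g) t := by
  by_contra! hneg
  have hmax : IsLocalMax g t := isLocalMax_of_deriv_deriv_neg hneg h.deriv_eq_zero hc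
  have hconst : g =ᶠ[𝓝 t] fun _ => g t := by
    filter_upwards [h, hmax] with s hmin hmax using le_antisymm hmax hmin
  exact hneg.ne (by simpa using hconst.deriv.deriv_eq)

theorem IsLocalMin.fderiv_fderiv_apply_self_nonneg {E : Type*} [NormedAddCommGroup E]
    [NormedSpace ℝ E] {v : E → ℝ} {x : E} (h : IsLocalMin v x) (hv : ContDiffAt ℝ 2 v x) (e : E) :
    0 ≤ fderiv ℝ (fun y => fderiv ℝ v y e) x e := by
  have hL : ∀ t : ℝ, HasDerivAt (fun t : ℝ => x + t • e) e t := fun t => by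
    simpa using ((hasDerivAt_id t).smul_const e).const_add x
  have hx0 : x = x + (0 : ℝ) • e := by simp
  have hLx : Tendsto (fun t : ℝ => x + t • e) (𝓝 0) (𝓝 x) := by
    simpa using (hL 0).continuousAt.tendsto
  have hderiv : deriv (fun t : ℝ => v (x + t • e)) =ᶠ[𝓝 0] fun t => fderiv ℝ v (x + t • e) e := by
    filter_upwards [hLx.eventually (hv.eventually (by simp))] with t ht
    exact ((ht.differentiableAt (by simp)).hasFDerivAt.comp_hasDerivAt t (hL t)).deriv
  have hΨ : DifferentiableAt ℝ (fun y => fderiv ℝ v y e) x :=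
    ((hv.fderiv_right (m := 1) le_rfl).differentiableAt one_ne_zero).clm_apply
      (differentiableAt_const e)
  have hsecond : fderiv ℝ (fun y => fderiv ℝ v y e) x e =
      deriv (deriv fun t : ℝ => v (x + t • e)) (0 : ℝ) := by
    rw [hderiv.deriv_eq]
    exact (hΨ.hasFDerivAt.comp_hasDerivAt_of_eq 0 (hL 0) hx0).deriv.symm
  rw [hsecond]
  have hmin : IsLocalMin (fun t : ℝ => v (x + t • e)) 0 :=
    IsLocalMin.comp_continuous (g := fun t : ℝ => x + t • e) (by simpa using h) (hL 0).continuousAt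
  exact hmin.deriv_deriv_nonneg
    (hv.continuousAt.comp_of_eq (hL 0).continuousAt hx0.symm)

section Laplacian

variable {n : ℕ} {u w : EuclideanSpace ℝ (Fin n) → ℝ} {x : EuclideanSpace ℝ (Fin n)}

theorem IsLocalMin.lap_nonneg (h : IsLocalMin u x) (hu : ContDiffAt ℝ 2 u x) : 0 ≤ lap u x :=
  Finset.sum_nonneg fun _ _ => h.fderiv_fderiv_apply_self_nonneg hu _

theorem ContDiffAt.lap_sub (hu : ContDiffAt ℝ 2 u x) (hw : ContDiffAt ℝ 2 w x) :
    lap (u - w) x = lap u x - lap w x := by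
  rw [lap, lap, lap, ← Finset.sum_sub_distrib]
  refine Finset.sum_congr rfl fun i _ => ?_
  set e : EuclideanSpace ℝ (Fin n) := EuclideanSpace.single i 1
  have hsub : (fun y => fderiv ℝ (u - w) y e) =ᶠ[𝓝 x]
      fun y => fderiv ℝ u y e - fderiv ℝ w y e := by
    filter_upwards [hu.eventually (by simp), hw.eventually (by simp)] with y huy hwy
    rw [fderiv_sub (huy.differentiableAt (by simp)) (hwy.differentiableAt (by simp))]
    rfl
  have hdiff : ∀ {v : EuclideanSpace ℝ (Fin n) → ℝ}, ContDiffAt ℝ 2 v x →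
      DifferentiableAt ℝ (fun y => fderiv ℝ v y e) x := fun hv =>
    ((hv.fderiv_right (m := 1) le_rfl).differentiableAt one_ne_zero).clm_apply
      (differentiableAt_const e)
  rw [hsub.fderiv_eq, fderiv_fun_sub (hdiff hu) (hdiff hw)]
  rfl

theorem lap_const_mul_one_sub_norm_sq (c : ℝ) :
    lap (fun y => c * (1 - ‖y‖ ^ 2)) x = -(2 * n * c) := by
  have hfd : ∀ y e : EuclideanSpace ℝ (Fin n),
      fderiv ℝ (fun y => c * (1 - ‖y‖ ^ 2)) y e = -(2 * c) * inner ℝ e y := by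
    intro y e
    rw [(((hasStrictFDerivAt_norm_sq y).hasFDerivAt.const_sub 1).const_mul c).fderiv]
    simp [real_inner_comm e y]
    ring
  have hfd2 : ∀ e : EuclideanSpace ℝ (Fin n),
      fderiv ℝ (fun y => -(2 * c) * inner ℝ e y) x e = -(2 * c) * ‖e‖ ^ 2 := by
    intro e
    have h : HasFDerivAt (fun y => -(2 * c) * inner ℝ e y) (-(2 * c) • innerSL ℝ e) x :=
      (innerSL ℝ e).hasFDerivAt.const_mul _
    rw [h.fderiv]
    simp
  simp only [lap, hfd, hfd2, PiLp.norm_single, norm_one, Finset.sum_const,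
    Finset.card_univ, Fintype.card_fin, nsmul_eq_mul]
  ring

theorem le_on_closure_of_lap_lt {U : Set (EuclideanSpace ℝ (Fin n))} (hU : IsOpen U)
    (hUb : Bornology.IsBounded U) (hu : ContDiffOn ℝ 2 u U) (hw : ContDiffOn ℝ 2 w U)
    (huc : ContinuousOn u (closure U))
    (hwc : ContinuousOn w (closure U)) (hfr : ∀ x ∈ frontier U, w x ≤ u x)
    (hlap : ∀ x ∈ U, u x < w x → lap u x < lap w x) :
    ∀ x ∈ closure U, w x ≤ u x := by
  by_contra! ⟨x₁, hx₁, hlt⟩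
  obtain ⟨x₀, hx₀, hmin⟩ := hUb.isCompact_closure.exists_isMinOn ⟨x₁, hx₁⟩ (huc.sub hwc)
  have hneg : u x₀ < w x₀ := sub_neg.1 ((hmin hx₁).trans_lt (sub_neg.2 hlt))
  have hx₀U : x₀ ∈ U := by
    rw [← hU.interior_eq, ← closure_sdiff_frontier]
    exact ⟨hx₀, fun hx₀fr => (hfr x₀ hx₀fr).not_gt hneg⟩
  have hu₀ := hu.contDiffAt (hU.mem_nhds hx₀U)
  have hw₀ := hw.contDiffAt (hU.mem_nhds hx₀U)
  have hloc : IsLocalMin (u - w) x₀ :=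
    hmin.isLocalMin (mem_of_superset (hU.mem_nhds hx₀U) subset_closure)
  have hlap₀ := hloc.lap_nonneg (hu₀.sub hw₀)
  rw [hu₀.lap_sub hw₀] at hlap₀
  linarith [hlap x₀ hx₀U hneg]

end Laplacian

theorem exists_pos_forall_Icc_lt_of_continuousWithinAt {g : ℝ → ℝ}
    (hg : ContinuousWithinAt g (Ici 0) 0) (h0 : 0 < g 0) : ∃ ε > 0, ∀ s ∈ Icc 0 ε, ε < g s := by
  obtain ⟨δ, hδ, hδg⟩ := mem_nhdsGE_iff_exists_Icc_subset.1 (hg (Ioi_mem_nhds (half_lt_self h0)))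
  exact ⟨min δ (g 0 / 2), by positivity, fun s hs =>
    (min_le_right _ _).trans_lt (hδg ⟨hs.1, hs.2.trans (min_le_left _ _)⟩)⟩

theorem abs_le_supAbsOn {n : ℕ} {s : Set (EuclideanSpace ℝ (Fin n))}
    {v : EuclideanSpace ℝ (Fin n) → ℝ} (hs : Bornology.IsBounded s)
    (hv : ContinuousOn v (closure s)) {x : EuclideanSpace ℝ (Fin n)} (hx : x ∈ s) :
    |v x| ≤ supAbsOn s v := by
  refine le_ciSup (f := fun y : s => |v y.1|) ?_ ⟨x, hx⟩
  refine (hs.isCompact_closure.bddAbove_image hv.abs).mono ?_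
  rintro _ ⟨y, rfl⟩
  exact ⟨y, subset_closure y.2, rfl⟩

theorem uniform_lower_bound_f0_positive_general
    (n : ℕ) (hn : 2 ≤ n) (f : ℝ → ℝ)
    (hf_lip : ∀ M : ℝ, 0 < M → ∃ K' : NNReal, LipschitzOnWith K' f (Set.Icc 0 M))
    (hf0 : 0 < f 0)
    (κ₀ : ℝ) (hκ₀ : 0 < κ₀) :
    ∃ c : ℝ, 0 < c ∧
      ∀ (κ u : EuclideanSpace ℝ (Fin n) → ℝ),
        ContDiffOn ℝ 1 κ (closure (ball (0 : EuclideanSpace ℝ (Fin n)) 1)) →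
        (∀ x ∈ ball (0 : EuclideanSpace ℝ (Fin n)) 1, κ₀ ≤ κ x) →
        ContDiffOn ℝ 2 u (ball (0 : EuclideanSpace ℝ (Fin n)) 1) →
        ContinuousOn u (closure (ball (0 : EuclideanSpace ℝ (Fin n)) 1)) →
        (∀ x ∈ ball (0 : EuclideanSpace ℝ (Fin n)) 1, -lap u x = κ x * f (u x)) →
        (∀ x ∈ ball (0 : EuclideanSpace ℝ (Fin n)) 1, 0 < u x) →
        (∀ x ∈ sphere (0 : EuclideanSpace ℝ (Fin n)) 1, u x = 0) →
        (∀ x ∈ ball (0 : EuclideanSpace ℝ (Fin n)) 1, c * (1 - ‖x‖ ^ 2) ≤ u x) ∧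
        c ≤ supAbsOn (ball (0 : EuclideanSpace ℝ (Fin n)) 1) u := by
  obtain ⟨K, hK⟩ := hf_lip 1 one_pos
  have hcont : ContinuousWithinAt (fun s => κ₀ * f s) (Ici 0) 0 :=
    ((hK.continuousOn.continuousWithinAt ⟨le_rfl, zero_le_one⟩).mono_of_mem_nhdsWithin
      (Icc_mem_nhdsGE one_pos)).const_mul κ₀
  obtain ⟨ε, hε, hεf⟩ := exists_pos_forall_Icc_lt_of_continuousWithinAt hcont (mul_pos hκ₀ hf0)
  have hn1 : (1 : ℝ) ≤ n := by exact_mod_cast one_le_two.trans hn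
  set c := ε / (2 * n) with hc
  have hcε : c ≤ ε := div_le_self hε.le (by linarith)
  have hnc : 2 * n * c = ε := by rw [hc]; field_simp
  refine ⟨c, by positivity, fun κ u _ hκ hu huc hpde hpos hbd => ?_⟩
  have hlow : ∀ x ∈ closure (ball 0 1), c * (1 - ‖x‖ ^ 2) ≤ u x := by
    refine le_on_closure_of_lap_lt isOpen_ball isBounded_ball hu
      ((contDiff_const.mul (contDiff_const.sub (contDiff_norm_sq ℝ))).contDiffOn) huc
      (by fun_prop) (fun x hx => ?_) (fun x hx hlt => ?_)
    · rw [frontier_ball 0 one_ne_zero] at hx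
      simp [hbd x hx, mem_sphere_zero_iff_norm.1 hx]
    · have hux : u x ∈ Icc 0 ε :=
        ⟨(hpos x hx).le, hlt.le.trans (by nlinarith [sq_nonneg ‖x‖])⟩
      have hfux := hεf _ hux
      have hfpos : 0 < f (u x) := pos_of_mul_pos_right (hε.trans hfux) hκ₀.le
      rw [lap_const_mul_one_sub_norm_sq, hnc]
      calc lap u x = -(κ x * f (u x)) := by linarith [hpde x hx]
        _ ≤ -(κ₀ * f (u x)) := neg_le_neg (mul_le_mul_of_nonneg_right (hκ x hx) hfpos.le)
        _ < -ε := neg_lt_neg hfux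
  refine ⟨fun x hx => hlow x (subset_closure hx), ?_⟩
  calc c = c * (1 - ‖(0 : EuclideanSpace ℝ (Fin n))‖ ^ 2) := by simp
    _ ≤ u 0 := hlow 0 (subset_closure (mem_ball_self one_pos))
    _ ≤ |u 0| := le_abs_self _
    _ ≤ supAbsOn (ball 0 1) u := abs_le_supAbsOn isBounded_ball huc (mem_ball_self one_pos)

/-- **Step 2 of the proof of Corollary 1.3: uniform lower bound when `f(0) > 0`.** Comparison
with a multiple of the torsion function gives `u(x) ≥ c (1 - |x|²)`, and in particular
`‖u‖_{L^∞(B₁)} ≥ c`, with `c` depending only on `n`, `f`, and `κ₀`. -/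
theorem uniform_lower_bound_f0_positive
    (n : ℕ) (hn : 2 ≤ n) (f : ℝ → ℝ)
    (hf_nonneg : ∀ s : ℝ, 0 ≤ s → 0 ≤ f s)
    (hf_lip : ∀ M : ℝ, 0 < M → ∃ K' : NNReal, LipschitzOnWith K' f (Set.Icc 0 M))
    (hf0 : 0 < f 0)
    (κ₀ : ℝ) (hκ₀ : 0 < κ₀) :
    ∃ c : ℝ, 0 < c ∧
      ∀ (κ u : EuclideanSpace ℝ (Fin n) → ℝ),
        ContDiffOn ℝ 1 κ (closure (ball (0 : EuclideanSpace ℝ (Fin n)) 1)) →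
        (∀ x ∈ ball (0 : EuclideanSpace ℝ (Fin n)) 1, κ₀ ≤ κ x) →
        ContDiffOn ℝ 2 u (ball (0 : EuclideanSpace ℝ (Fin n)) 1) →
        ContinuousOn u (closure (ball (0 : EuclideanSpace ℝ (Fin n)) 1)) →
        (∀ x ∈ ball (0 : EuclideanSpace ℝ (Fin n)) 1, -lap u x = κ x * f (u x)) →
        (∀ x ∈ ball (0 : EuclideanSpace ℝ (Fin n)) 1, 0 < u x) →
        (∀ x ∈ sphere (0 : EuclideanSpace ℝ (Fin n)) 1, u x = 0) →
        (∀ x ∈ ball (0 : EuclideanSpace ℝ (Fin n)) 1, c * (1 - ‖x‖ ^ 2) ≤ u x) ∧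
        c ≤ supAbsOn (ball (0 : EuclideanSpace ℝ (Fin n)) 1) u :=
  uniform_lower_bound_f0_positive_general n hn f hf_lip hf0 κ₀ hκ₀
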